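/- arXiv:2602.12932 — 4 statements merged into one kernel-verified Lean document; each statement's English description precedes it below -/
import Mathlib

section
/- Let p₁ be a probability density on ℝ^d and ℓ: ℝ^d → (0, ∞) a bounded measurable function (the likelihood x₁ ↦ p̃(y | x₁) of a fixed observation y) with 0 < ∫ ℓ(x₁) p₁(x₁) dx₁ < ∞. Let p₁^y(x₁) = ℓ(x₁) p₁(x₁) / ∫ ℓ p₁ denote the posterior density, let v and v_c* denote the flow-matching velocity fields built from p₁ and from p₁^y respectively, and define g_t(x) = (∫ φ_t(x, x₁) ℓ(x₁) p₁(x₁) dx₁) / f_t(x), the conditional likelihood of y given X̃(t) = x. Then for every t ∈ (0,1) and every x ∈ ℝ^d, g_t(x) > 0, g_t is differentiable at x, and the optimal conditional velocity field decomposes as v_c*(x, t) = v(x, t) + ((1 − t)/t) · ∇_x log g_t(x). -/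
open MeasureTheory Real

/-- The Gaussian interpolation kernel `φ_t(x, x₁)`, i.e. the density of
`N(t x₁, (1-t)² I_d)` evaluated at `x`. -/
noncomputable def phi (d : ℕ) (t : ℝ) (x x₁ : EuclideanSpace ℝ (Fin d)) : ℝ :=
  (2 * π * (1 - t) ^ 2) ^ (-(d : ℝ) / 2) * Real.exp (-‖x - t • x₁‖ ^ 2 / (2 * (1 - t) ^ 2))

/-- The marginal density `f_t^q(x) = ∫ φ_t(x, x₁) q(x₁) dx₁`. -/
noncomputable def fMarg (d : ℕ) (q : EuclideanSpace ℝ (Fin d) → ℝ) (t : ℝ)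
    (x : EuclideanSpace ℝ (Fin d)) : ℝ :=
  ∫ x₁, phi d t x x₁ * q x₁

/-- The flow-matching velocity field
`v^q(x, t) = (1/((1−t) f_t^q(x))) ∫ (x₁ − x) φ_t(x, x₁) q(x₁) dx₁`. -/
noncomputable def vField (d : ℕ) (q : EuclideanSpace ℝ (Fin d) → ℝ) (t : ℝ)
    (x : EuclideanSpace ℝ (Fin d)) : EuclideanSpace ℝ (Fin d) :=
  ((1 - t) * fMarg d q t x)⁻¹ • ∫ x₁, (phi d t x x₁ * q x₁) • (x₁ - x)

lemma aux_mul_exp_le (r σ : ℝ) (hr : 0 ≤ r) (hσ : 0 < σ) :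
    r * Real.exp (-r ^ 2 / (2 * σ ^ 2)) ≤ Real.sqrt 2 * σ := by
  set b := Real.sqrt 2 * σ with hbdef
  have hb : 0 < b := by positivity
  have h2 : b ^ 2 = 2 * σ ^ 2 := by
    rw [hbdef, mul_pow, Real.sq_sqrt (by norm_num : (2:ℝ) ≥ 0)]
  have hdenom : (0:ℝ) < 2 * σ ^ 2 := by positivity
  have hexp : 1 + r ^ 2 / (2 * σ ^ 2) ≤ Real.exp (r ^ 2 / (2 * σ ^ 2)) := by
    have := Real.add_one_le_exp (r ^ 2 / (2 * σ ^ 2)); linarith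
  have h1 : r * (2 * σ ^ 2) ≤ b * (2 * σ ^ 2 + r ^ 2) := by
    nlinarith [sq_nonneg (b - r), hb.le, hr]
  have h1' : r ≤ b * (1 + r ^ 2 / (2 * σ ^ 2)) := by
    rw [mul_add, mul_one, ← sub_nonneg]
    have : b + b * (r ^ 2 / (2 * σ ^ 2)) - r
        = (b * (2 * σ ^ 2 + r ^ 2) - r * (2 * σ ^ 2)) / (2 * σ ^ 2) := by
      field_simp
    rw [this]
    exact div_nonneg (by linarith) hdenom.le
  have key : r ≤ b * Real.exp (r ^ 2 / (2 * σ ^ 2)) :=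
    h1'.trans (mul_le_mul_of_nonneg_left hexp hb.le)
  calc r * Real.exp (-r ^ 2 / (2 * σ ^ 2))
      ≤ b * Real.exp (r ^ 2 / (2 * σ ^ 2)) * Real.exp (-r ^ 2 / (2 * σ ^ 2)) :=
        mul_le_mul_of_nonneg_right key (Real.exp_pos _).le
    _ = b := by
        rw [mul_assoc, ← Real.exp_add, neg_div, add_neg_cancel, Real.exp_zero, mul_one]

section phiLemmas
variable {d : ℕ} {t : ℝ} (x a : EuclideanSpace ℝ (Fin d))

lemma base_pos (ht1 : t < 1) : (0:ℝ) < 2 * π * (1 - t) ^ 2 :=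
  mul_pos (by positivity) (pow_pos (by linarith) 2)

lemma c_pos (d : ℕ) (ht1 : t < 1) : (0:ℝ) < (2 * π * (1 - t) ^ 2) ^ (-(d : ℝ) / 2) :=
  Real.rpow_pos_of_pos (base_pos ht1) _

lemma phi_pos (ht1 : t < 1) : 0 < phi d t x a :=
  mul_pos (c_pos d ht1) (Real.exp_pos _)

lemma phi_le (ht1 : t < 1) : phi d t x a ≤ (2 * π * (1 - t) ^ 2) ^ (-(d : ℝ) / 2) := by
  have h : Real.exp (-‖x - t • a‖ ^ 2 / (2 * (1 - t) ^ 2)) ≤ 1 := by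
    rw [Real.exp_le_one_iff]
    apply div_nonpos_of_nonpos_of_nonneg (neg_nonpos.mpr (by positivity)) (by positivity)
  calc phi d t x a ≤ (2 * π * (1 - t) ^ 2) ^ (-(d : ℝ) / 2) * 1 :=
        mul_le_mul_of_nonneg_left h (c_pos d ht1).le
    _ = _ := mul_one _

lemma phi_mul_norm_le (ht1 : t < 1) :
    phi d t x a * ‖x - t • a‖
      ≤ (2 * π * (1 - t) ^ 2) ^ (-(d : ℝ) / 2) * (Real.sqrt 2 * (1 - t)) := by
  unfold phi
  rw [mul_assoc]
  exact mul_le_mul_of_nonneg_left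
    (by rw [mul_comm]; exact aux_mul_exp_le _ _ (norm_nonneg _) (by linarith)) (c_pos d ht1).le

lemma phi_continuous (d : ℕ) (t : ℝ) (x : EuclideanSpace ℝ (Fin d)) :
    Continuous (phi d t x) := by
  unfold phi; fun_prop

section integ
variable {d : ℕ} {t : ℝ}
local notation "H" => EuclideanSpace ℝ (Fin d)

lemma int_phi_mul (ht1 : t < 1) (w : H → ℝ) (hw_meas : Measurable w)
    (hw_int : Integrable w) (x : H) :
    Integrable (fun a => phi d t x a * w a) := by
  apply Integrable.mono' (hw_int.norm.const_mul ((2 * π * (1 - t) ^ 2) ^ (-(d : ℝ) / 2)))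
  · exact (phi_continuous d t x).aestronglyMeasurable.mul hw_meas.aestronglyMeasurable
  · filter_upwards with a
    rw [norm_mul, Real.norm_eq_abs (phi d t x a), abs_of_pos (phi_pos x a ht1)]
    exact mul_le_mul_of_nonneg_right (phi_le x a ht1) (norm_nonneg _)

lemma phi_mul_norm_sub_le (ht0 : 0 < t) (ht1 : t < 1) (x a : H) :
    phi d t x a * ‖a - x‖
      ≤ ((2 * π * (1 - t) ^ 2) ^ (-(d : ℝ) / 2) * (Real.sqrt 2 * (1 - t))
          + (1 - t) * ((2 * π * (1 - t) ^ 2) ^ (-(d : ℝ) / 2) * ‖x‖)) / t := by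
  have h4 : t * ‖a - x‖ ≤ ‖x - t • a‖ + (1 - t) * ‖x‖ := by
    have e1 : t • (a - x) = (t • a - x) + (x - t • x) := by module
    have e0 : x - t • x = (1 - t) • x := by module
    have e2 : ‖x - t • x‖ = (1 - t) * ‖x‖ := by
      rw [e0, norm_smul, Real.norm_eq_abs, abs_of_pos (by linarith : (0:ℝ) < 1 - t)]
    calc t * ‖a - x‖ = ‖t • (a - x)‖ := by
            rw [norm_smul, Real.norm_eq_abs, abs_of_pos ht0]
      _ ≤ ‖t • a - x‖ + ‖x - t • x‖ := by rw [e1]; exact norm_add_le _ _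
      _ = ‖x - t • a‖ + (1 - t) * ‖x‖ := by rw [norm_sub_rev, e2]
  rw [le_div_iff₀ ht0]
  nlinarith [phi_mul_norm_le x a ht1, (phi_pos x a ht1).le,
    mul_le_mul_of_nonneg_left h4 (phi_pos x a ht1).le,
    mul_le_mul_of_nonneg_right (phi_le x a ht1)
      (mul_nonneg (by linarith) (norm_nonneg _) : (0:ℝ) ≤ (1 - t) * ‖x‖)]

lemma int_smul_sub (ht0 : 0 < t) (ht1 : t < 1) (w : H → ℝ) (hw_meas : Measurable w)
    (hw_int : Integrable w) (x : H) :
    Integrable (fun a => (phi d t x a * w a) • (a - x)) := by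
  apply Integrable.mono' (hw_int.norm.const_mul
    (((2 * π * (1 - t) ^ 2) ^ (-(d : ℝ) / 2) * (Real.sqrt 2 * (1 - t))
        + (1 - t) * ((2 * π * (1 - t) ^ 2) ^ (-(d : ℝ) / 2) * ‖x‖)) / t))
  · exact ((phi_continuous d t x).aestronglyMeasurable.mul
      hw_meas.aestronglyMeasurable).smul
      ((continuous_id.sub continuous_const).aestronglyMeasurable)
  · filter_upwards with a
    rw [norm_smul, norm_mul, Real.norm_eq_abs (phi d t x a), abs_of_pos (phi_pos x a ht1)]
    calc phi d t x a * ‖w a‖ * ‖a - x‖ = (phi d t x a * ‖a - x‖) * ‖w a‖ := by ring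
      _ ≤ _ := mul_le_mul_of_nonneg_right (phi_mul_norm_sub_le ht0 ht1 x a) (norm_nonneg _)

lemma int_smul_tsub (ht1 : t < 1) (w : H → ℝ) (hw_meas : Measurable w)
    (hw_int : Integrable w) (x : H) :
    Integrable (fun a => (phi d t x a * w a) • (t • a - x)) := by
  apply Integrable.mono' (hw_int.norm.const_mul
    ((2 * π * (1 - t) ^ 2) ^ (-(d : ℝ) / 2) * (Real.sqrt 2 * (1 - t))))
  · exact ((phi_continuous d t x).aestronglyMeasurable.mul
      hw_meas.aestronglyMeasurable).smul
      ((by fun_prop : Continuous fun a : H => t • a - x).aestronglyMeasurable)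
  · filter_upwards with a
    rw [norm_smul, norm_mul, Real.norm_eq_abs (phi d t x a), abs_of_pos (phi_pos x a ht1)]
    calc phi d t x a * ‖w a‖ * ‖t • a - x‖ = (phi d t x a * ‖x - t • a‖) * ‖w a‖ := by
          rw [norm_sub_rev]; ring
      _ ≤ _ := mul_le_mul_of_nonneg_right (phi_mul_norm_le x a ht1) (norm_nonneg _)

lemma integral_phi_mul_pos (ht1 : t < 1) (w : H → ℝ) (hw_meas : Measurable w)
    (hw_int : Integrable w) (hw_nonneg : ∀ a, 0 ≤ w a) (hw_pos : 0 < ∫ a, w a) (x : H) :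
    0 < ∫ a, phi d t x a * w a := by
  rw [integral_pos_iff_support_of_nonneg
    (fun a => mul_nonneg (phi_pos x a ht1).le (hw_nonneg a))
    (int_phi_mul ht1 w hw_meas hw_int x)]
  have hsupp : (Function.support fun a => phi d t x a * w a) = Function.support w := by
    ext a
    simp only [Function.mem_support, mul_ne_zero_iff]
    exact ⟨fun h => h.2, fun h => ⟨(phi_pos x a ht1).ne', h⟩⟩
  rw [hsupp]
  exact (integral_pos_iff_support_of_nonneg hw_nonneg hw_int).mp hw_pos

end integ

section deriv
variable {d : ℕ} {t : ℝ}
local notation "H" => EuclideanSpace ℝ (Fin d)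

lemma hasFDerivAt_phi (ht1 : t < 1) (a x : H) :
    HasFDerivAt (fun y => phi d t y a)
      ((phi d t x a * (((1:ℝ) - t) ^ 2)⁻¹) • innerSL ℝ (t • a - x)) x := by
  have hσ : (0:ℝ) < (1 - t) ^ 2 := pow_pos (by linarith) 2
  have h1 : HasFDerivAt (fun y : H => ‖y - t • a‖ ^ 2) (2 • innerSL ℝ (x - t • a)) x := by
    have h0 : HasFDerivAt (fun y : H => y - t • a) (ContinuousLinearMap.id ℝ _) x :=
      (hasFDerivAt_id x).sub_const _
    simpa using h0.norm_sq
  have h2 := h1.const_mul (-(2 * (1 - t) ^ 2)⁻¹)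
  have h3 := h2.exp
  have h4 := h3.const_mul ((2 * π * (1 - t) ^ 2) ^ (-(d : ℝ) / 2))
  have hfun : (fun y : H => phi d t y a)
      = fun y => (2 * π * (1 - t) ^ 2) ^ (-(d : ℝ) / 2)
          * Real.exp (-(2 * (1 - t) ^ 2)⁻¹ * ‖y - t • a‖ ^ 2) := by
    funext y; unfold phi; congr 1; ring
  rw [hfun]
  refine h4.congr_fderiv ?_
  symm
  have hphi : phi d t x a = (2 * π * (1 - t) ^ 2) ^ (-(d : ℝ) / 2)
      * Real.exp (-(2 * (1 - t) ^ 2)⁻¹ * ‖x - t • a‖ ^ 2) := by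
    unfold phi; congr 1; ring
  ext v
  have hneg : (t • a - x) = -(x - t • a) := by module
  rw [hneg]
  simp only [hphi, ContinuousLinearMap.smul_apply, ContinuousLinearMap.coe_smul',
    Pi.smul_apply, map_neg, ContinuousLinearMap.neg_apply, smul_eq_mul, nsmul_eq_mul,
    Nat.cast_ofNat]
  field_simp

set_option maxHeartbeats 1000000 in
set_option synthInstance.maxHeartbeats 400000 in
lemma hasFDerivAt_integral_phi (ht1 : t < 1) (w : H → ℝ) (hw_meas : Measurable w)
    (hw_int : Integrable w) (x : H) :
    HasFDerivAt (fun y : H => ∫ a, phi d t y a * w a)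
      (innerSL ℝ ((((1:ℝ) - t) ^ 2)⁻¹ • ∫ a, (phi d t x a * w a) • (t • a - x))) x := by
  have hσ : (0:ℝ) < (1 - t) ^ 2 := pow_pos (by linarith) 2
  have key := hasFDerivAt_integral_of_dominated_of_fderiv_le
    (𝕜 := ℝ) (μ := (volume : Measure H))
    (F := fun (y : H) a => phi d t y a * w a)
    (F' := fun (y : H) a => (phi d t y a * w a * (((1:ℝ) - t) ^ 2)⁻¹) • innerSL ℝ (t • a - y))
    (bound := fun a => (((1:ℝ) - t) ^ 2)⁻¹
      * ((2 * π * (1 - t) ^ 2) ^ (-(d : ℝ) / 2) * (Real.sqrt 2 * (1 - t))) * |w a|)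
    (x₀ := x) (s := Metric.ball x 1) (Metric.ball_mem_nhds x one_pos)
    (Filter.Eventually.of_forall fun y =>
      (phi_continuous d t y).aestronglyMeasurable.mul hw_meas.aestronglyMeasurable)
    (int_phi_mul ht1 w hw_meas hw_int x)
    (((phi_continuous d t x).aestronglyMeasurable.mul
        hw_meas.aestronglyMeasurable).mul_const _ |>.smul
      (((innerSL ℝ).continuous.comp
        (by fun_prop : Continuous fun a : H => t • a - x)).aestronglyMeasurable))
    ?_ ?_ ?_
  · refine key.congr_fderiv ?_
    symm
    have hptw : ∀ a : H, (phi d t x a * w a * (((1:ℝ) - t) ^ 2)⁻¹) • innerSL ℝ (t • a - x)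
        = innerSL ℝ ((((1:ℝ) - t) ^ 2)⁻¹ • ((phi d t x a * w a) • (t • a - x))) := by
      intro a
      rw [_root_.map_smul, _root_.map_smul, smul_smul]
      congr 1
      ring
    calc innerSL ℝ ((((1:ℝ) - t) ^ 2)⁻¹ • ∫ a, (phi d t x a * w a) • (t • a - x))
        = innerSL ℝ (∫ a, (((1:ℝ) - t) ^ 2)⁻¹ • ((phi d t x a * w a) • (t • a - x))) := by
          rw [integral_smul]
      _ = ∫ a, innerSL ℝ ((((1:ℝ) - t) ^ 2)⁻¹ • ((phi d t x a * w a) • (t • a - x))) :=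
          (ContinuousLinearMap.integral_comp_comm (innerSL ℝ)
            ((int_smul_tsub ht1 w hw_meas hw_int x).smul (((1:ℝ) - t) ^ 2)⁻¹)).symm
      _ = ∫ a, (phi d t x a * w a * (((1:ℝ) - t) ^ 2)⁻¹) • innerSL ℝ (t • a - x) := by
          simp_rw [hptw]
  · apply Filter.Eventually.of_forall
    intro a y hy
    beta_reduce
    refine le_trans (ContinuousLinearMap.opNorm_smul_le _ _) ?_
    rw [innerSL_apply_norm, norm_sub_rev, Real.norm_eq_abs, abs_mul, abs_mul,
      abs_of_pos (phi_pos y a ht1), abs_of_pos (inv_pos.mpr hσ)]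
    calc phi d t y a * |w a| * ((1 - t) ^ 2)⁻¹ * ‖y - t • a‖
        = ((1 - t) ^ 2)⁻¹ * ((phi d t y a * ‖y - t • a‖) * |w a|) := by ring
      _ ≤ ((1 - t) ^ 2)⁻¹ * (((2 * π * (1 - t) ^ 2) ^ (-(d : ℝ) / 2)
            * (Real.sqrt 2 * (1 - t))) * |w a|) := by
          apply mul_le_mul_of_nonneg_left _ (inv_pos.mpr hσ).le
          exact mul_le_mul_of_nonneg_right (phi_mul_norm_le y a ht1) (abs_nonneg _)
      _ = _ := by ring
  · exact (hw_int.abs.const_mul _)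
  · apply Filter.Eventually.of_forall
    intro a y hy
    have h := (hasFDerivAt_phi ht1 a y).mul_const (w a)
    refine h.congr_fderiv ?_
    symm
    beta_reduce
    rw [smul_smul]
    congr 1
    ring

end deriv

section fin
variable {d : ℕ} {t : ℝ}
local notation "H" => EuclideanSpace ℝ (Fin d)

lemma integral_tsub_eq (ht0 : 0 < t) (ht1 : t < 1) (w : H → ℝ) (hw_meas : Measurable w)
    (hw_int : Integrable w) (x : H) :
    (∫ a, (phi d t x a * w a) • (t • a - x))
      = t • (∫ a, (phi d t x a * w a) • (a - x))
        - ((1 - t) * ∫ a, phi d t x a * w a) • x := by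
  have h1 : ∀ a : H, (phi d t x a * w a) • (t • a - x)
      = t • ((phi d t x a * w a) • (a - x)) - (1 - t) • ((phi d t x a * w a) • x) := by
    intro a; module
  simp_rw [h1]
  have hInt1 : Integrable (fun a : H => t • ((phi d t x a * w a) • (a - x))) :=
    Integrable.smul t (int_smul_sub ht0 ht1 w hw_meas hw_int x)
  have hInt2 : Integrable (fun a : H => ((1:ℝ) - t) • ((phi d t x a * w a) • x)) :=
    Integrable.smul ((1:ℝ) - t) ((int_phi_mul ht1 w hw_meas hw_int x).smul_const x)
  rw [integral_sub hInt1 hInt2, integral_smul, integral_smul, integral_smul_const, smul_smul]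

end fin

set_option maxHeartbeats 1000000 in
/-- Decomposition of the optimal conditional velocity field:
`v_c*(x, t) = v(x, t) + ((1 − t)/t) ∇_x log g_t(x)`, where `g_t` is the conditional
likelihood of the observation given `X̃(t) = x`; moreover `g_t(x) > 0` and `g_t` is
differentiable at every `x`, for every `t ∈ (0,1)`. -/
theorem stmt0 (d : ℕ) (hd : 1 ≤ d)
    (p₁ : EuclideanSpace ℝ (Fin d) → ℝ)
    (hp₁_meas : Measurable p₁) (hp₁_nonneg : ∀ x, 0 ≤ p₁ x)
    (hp₁_int : ∫ x, p₁ x = 1)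
    (ℓ : EuclideanSpace ℝ (Fin d) → ℝ)
    (hℓ_meas : Measurable ℓ) (hℓ_pos : ∀ x, 0 < ℓ x)
    (M : ℝ) (hℓ_bd : ∀ x, ℓ x ≤ M)
    (hZ_int : Integrable (fun x => ℓ x * p₁ x))
    (hZ_pos : 0 < ∫ x, ℓ x * p₁ x)
    (py : EuclideanSpace ℝ (Fin d) → ℝ)
    (hpy : ∀ x, py x = ℓ x * p₁ x / ∫ z, ℓ z * p₁ z)
    (g : ℝ → EuclideanSpace ℝ (Fin d) → ℝ)
    (hg : ∀ t x, g t x = (∫ x₁, phi d t x x₁ * ℓ x₁ * p₁ x₁) / fMarg d p₁ t x) :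
    ∀ t ∈ Set.Ioo (0 : ℝ) 1, ∀ x : EuclideanSpace ℝ (Fin d),
      0 < g t x ∧ DifferentiableAt ℝ (g t) x ∧
      vField d py t x =
        vField d p₁ t x + ((1 - t) / t) • gradient (fun z => Real.log (g t z)) x := by
  intro t ht x
  obtain ⟨ht0, ht1⟩ := ht
  have hZne : (∫ z, ℓ z * p₁ z) ≠ 0 := ne_of_gt hZ_pos
  have hp₁_integrable : Integrable p₁ := by
    by_contra h
    rw [integral_undef h] at hp₁_int
    norm_num at hp₁_int
  have hwN_meas : Measurable (fun a => ℓ a * p₁ a) := hℓ_meas.mul hp₁_meas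
  have hwN_nonneg : ∀ a, 0 ≤ ℓ a * p₁ a := fun a => mul_nonneg (hℓ_pos a).le (hp₁_nonneg a)
  -- positivity of the two marginal densities, at every point
  have hNpos : ∀ y : EuclideanSpace ℝ (Fin d), 0 < ∫ a, phi d t y a * (ℓ a * p₁ a) :=
    fun y => integral_phi_mul_pos ht1 _ hwN_meas hZ_int hwN_nonneg hZ_pos y
  have hfpos : ∀ y : EuclideanSpace ℝ (Fin d), 0 < ∫ a, phi d t y a * p₁ a :=
    fun y => integral_phi_mul_pos ht1 _ hp₁_meas hp₁_integrable hp₁_nonneg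
      (by rw [hp₁_int]; norm_num) y
  have hgz : ∀ z, g t z
      = (∫ a, phi d t z a * (ℓ a * p₁ a)) / (∫ a, phi d t z a * p₁ a) := by
    intro z
    rw [hg, show fMarg d p₁ t z = ∫ a, phi d t z a * p₁ a from rfl]
    congr 1
    simp_rw [mul_assoc]
  -- derivatives of the two marginal densities
  have hN := hasFDerivAt_integral_phi ht1 (fun a => ℓ a * p₁ a) hwN_meas hZ_int x
  have hf := hasFDerivAt_integral_phi ht1 p₁ hp₁_meas hp₁_integrable x
  refine ⟨by rw [hgz]; exact div_pos (hNpos x) (hfpos x), ?_, ?_⟩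
  · have hgfun : g t = fun z =>
        (∫ a, phi d t z a * (ℓ a * p₁ a)) / (∫ a, phi d t z a * p₁ a) := funext hgz
    rw [hgfun]
    simp only [div_eq_mul_inv]
    exact hN.differentiableAt.mul (hf.differentiableAt.inv (ne_of_gt (hfpos x)))
  -- the gradient computation
  have hlog : (fun z => Real.log (g t z)) = fun z =>
      Real.log (∫ a, phi d t z a * (ℓ a * p₁ a)) - Real.log (∫ a, phi d t z a * p₁ a) := by
    funext z
    rw [hgz z, Real.log_div (ne_of_gt (hNpos z)) (ne_of_gt (hfpos z))]
  have hsub := (hN.log (ne_of_gt (hNpos x))).sub (hf.log (ne_of_gt (hfpos x)))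
  set σi : ℝ := (((1:ℝ) - t) ^ 2)⁻¹ with hσi
  set B' : EuclideanSpace ℝ (Fin d) :=
    ∫ a, (phi d t x a * (ℓ a * p₁ a)) • (t • a - x) with hB'
  set A' : EuclideanSpace ℝ (Fin d) := ∫ a, (phi d t x a * p₁ a) • (t • a - x) with hA'
  set Nx : ℝ := ∫ a, phi d t x a * (ℓ a * p₁ a) with hNx
  set fx : ℝ := ∫ a, phi d t x a * p₁ a with hfx
  have hgrad : HasGradientAt (fun z => Real.log (g t z))
      (Nx⁻¹ • (σi • B') - fx⁻¹ • (σi • A')) x := by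
    rw [hasGradientAt_iff_hasFDerivAt]
    have htd : (InnerProductSpace.toDual ℝ (EuclideanSpace ℝ (Fin d)))
        (Nx⁻¹ • (σi • B') - fx⁻¹ • (σi • A'))
        = Nx⁻¹ • innerSL ℝ (σi • B') - fx⁻¹ • innerSL ℝ (σi • A') := by
      ext v
      simp [InnerProductSpace.toDual_apply_apply, inner_sub_left, real_inner_smul_left]
    rw [hlog, htd]
    exact hsub
  rw [hgrad.gradient]
  -- identify the two velocity fields
  have hIpy : (∫ a, (phi d t x a * py a) • (a - x))
      = (∫ z, ℓ z * p₁ z)⁻¹ • ∫ a, (phi d t x a * (ℓ a * p₁ a)) • (a - x) := by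
    rw [← integral_smul]
    congr 1
    funext a
    rw [hpy, smul_smul]
    congr 1
    ring
  have hfpy : fMarg d py t x = (∫ z, ℓ z * p₁ z)⁻¹ * Nx := by
    show (∫ a, phi d t x a * py a) = _
    rw [hNx, ← integral_const_mul]
    congr 1
    funext a
    rw [hpy]
    ring
  have hvpy : vField d py t x = ((1 - t) * Nx)⁻¹
      • ∫ a, (phi d t x a * (ℓ a * p₁ a)) • (a - x) := by
    show ((1 - t) * fMarg d py t x)⁻¹ • (∫ a, (phi d t x a * py a) • (a - x)) = _
    rw [hfpy, hIpy, smul_smul]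
    congr 1
    have hNne : Nx ≠ 0 := ne_of_gt (hNpos x)
    have h1t : (1:ℝ) - t ≠ 0 := by linarith
    field_simp
  have hvp1 : vField d p₁ t x = ((1 - t) * fx)⁻¹ • ∫ a, (phi d t x a * p₁ a) • (a - x) := rfl
  rw [hvpy, hvp1, hB', hA',
    integral_tsub_eq ht0 ht1 _ hwN_meas hZ_int x,
    integral_tsub_eq ht0 ht1 _ hp₁_meas hp₁_integrable x]
  have hNne : Nx ≠ 0 := ne_of_gt (hNpos x)
  have hfne : fx ≠ 0 := ne_of_gt (hfpos x)
  have h1t : (1:ℝ) - t ≠ 0 := by linarith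
  have htne : t ≠ 0 := ne_of_gt ht0
  rw [hσi]
  match_scalars
  · field_simp
  · field_simp
    ring
  · field_simp [h1t, htne, hNne, hfne]
    simp only [mul_assoc, ← hNx, ← hfx]
    ring
end phiLemmas
end

section
/- Let d ≥ 1, let v: ℝ^d × (0,1) → ℝ^d be continuously differentiable, let f: ℝ^d × (0,1) → (0, ∞) be twice continuously differentiable in x and continuously differentiable in t, and suppose: (i) f satisfies the continuity equation ∂f/∂t(x, t) = −∇_x · (v(x, t) f(x, t)) for all (x, t); and (ii) the score identity (1 − t) ∇_x log f(x, t) = −x + t v(x, t) holds for all (x, t). Then for every function α: (0,1) → [0, ∞), f also satisfies the Fokker–Planck–Kolmogorov equation ∂f/∂t(x, t) = −∇_x · ( [ α(t)(−x + t v(x, t)) + v(x, t) ] f(x, t) ) + (1 − t) α(t) Δ_x f(x, t), which is the Fokker–Planck–Kolmogorov equation associated with the SDE dX(t) = { α(t)[−X(t) + t v(X(t), t)] + v(X(t), t) } dt + √(2(1−t)α(t)) dB(t). -/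
open MeasureTheory Real

/-- Divergence (in the space variable) of a vector field on `ℝ^d`:
`∇·w (x) = ∑ i ∂wᵢ/∂xᵢ (x)`. -/
noncomputable def divg (d : ℕ) (w : EuclideanSpace ℝ (Fin d) → EuclideanSpace ℝ (Fin d))
    (x : EuclideanSpace ℝ (Fin d)) : ℝ :=
  ∑ i, fderiv ℝ w x (EuclideanSpace.single i 1) i

/-- Laplacian of a scalar field on `ℝ^d`: `Δf (x) = ∑ i ∂²f/∂xᵢ² (x)`. -/
noncomputable def lapl (d : ℕ) (f : EuclideanSpace ℝ (Fin d) → ℝ)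
    (x : EuclideanSpace ℝ (Fin d)) : ℝ :=
  ∑ i, fderiv ℝ (fun z => fderiv ℝ f z (EuclideanSpace.single i 1)) x
    (EuclideanSpace.single i 1)

section Helpers

variable {d : ℕ}

lemma divg_add (g h : EuclideanSpace ℝ (Fin d) → EuclideanSpace ℝ (Fin d))
    (x : EuclideanSpace ℝ (Fin d)) (hg : DifferentiableAt ℝ g x) (hh : DifferentiableAt ℝ h x) :
    divg d (fun z => g z + h z) x = divg d g x + divg d h x := by
  simp [divg, fderiv_fun_add hg hh, Finset.sum_add_distrib]

lemma divg_smul (c : ℝ) (g : EuclideanSpace ℝ (Fin d) → EuclideanSpace ℝ (Fin d))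
    (x : EuclideanSpace ℝ (Fin d)) (hg : DifferentiableAt ℝ g x) :
    divg d (fun z => c • g z) x = c * divg d g x := by
  simp [divg, fderiv_fun_const_smul hg, Finset.mul_sum]

lemma gradient_apply_eq (F : EuclideanSpace ℝ (Fin d) → ℝ) (z : EuclideanSpace ℝ (Fin d))
    (i : Fin d) : gradient F z i = fderiv ℝ F z (EuclideanSpace.single i 1) := by
  have : fderiv ℝ F z (EuclideanSpace.single i 1)
      = @inner ℝ _ _ (gradient F z) (EuclideanSpace.single i (1:ℝ)) := by
    rw [gradient]
    simp
  rw [this, EuclideanSpace.inner_single_right]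
  simp

lemma gradient_contDiff (F : EuclideanSpace ℝ (Fin d) → ℝ) (hF : ContDiff ℝ 2 F) :
    ContDiff ℝ 1 (fun z => gradient F z) := by
  have h1 : ContDiff ℝ 1 (fderiv ℝ F) := hF.fderiv_right (by norm_num)
  have h2 : (fun z => gradient F z)
      = fun z => (InnerProductSpace.toDual ℝ (EuclideanSpace ℝ (Fin d))).symm (fderiv ℝ F z) := rfl
  rw [h2]
  exact (InnerProductSpace.toDual ℝ (EuclideanSpace ℝ (Fin d))).symm.contDiff.comp h1

lemma divg_gradient (F : EuclideanSpace ℝ (Fin d) → ℝ) (hF : ContDiff ℝ 2 F)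
    (x : EuclideanSpace ℝ (Fin d)) :
    divg d (fun z => gradient F z) x = lapl d F x := by
  unfold divg lapl
  refine Finset.sum_congr rfl fun i _ => ?_
  have hw : DifferentiableAt ℝ (fun z => gradient F z) x :=
    ((gradient_contDiff F hF).differentiable one_ne_zero) x
  have hcomp := ((EuclideanSpace.proj (𝕜 := ℝ) i).hasFDerivAt.comp x hw.hasFDerivAt).fderiv
  have heq : (fun z => gradient F z i) = fun z => fderiv ℝ F z (EuclideanSpace.single i 1) := by
    funext z; exact gradient_apply_eq F z i
  have h2 : (fun z => gradient F z i)
      = (⇑(EuclideanSpace.proj (𝕜 := ℝ) i) ∘ fun z => gradient F z) := rfl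
  rw [← heq, h2, hcomp]
  rfl

end Helpers

/-- If `f` satisfies the continuity equation for the velocity field `v`
and the score identity `(1 − t) ∇_x log f(x,t) = −x + t v(x,t)` holds, then for every
`α : (0,1) → [0,∞)` the density `f` also satisfies the Fokker–Planck–Kolmogorov equation
`∂f/∂t = −∇_x·([α(t)(−x + t v) + v] f) + (1 − t) α(t) Δ_x f` associated with the SDE
`dX = {α(t)[−X + t v(X,t)] + v(X,t)} dt + √(2(1−t)α(t)) dB`. -/
theorem stmt1 (d : ℕ) (hd : 1 ≤ d)
    (v : EuclideanSpace ℝ (Fin d) → ℝ → EuclideanSpace ℝ (Fin d))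
    (f : EuclideanSpace ℝ (Fin d) → ℝ → ℝ)
    (hv : ContDiffOn ℝ 1 (fun p : EuclideanSpace ℝ (Fin d) × ℝ => v p.1 p.2)
      (Set.univ ×ˢ Set.Ioo 0 1))
    (hf_x : ∀ t ∈ Set.Ioo (0 : ℝ) 1, ContDiff ℝ 2 (fun x => f x t))
    (hf_t : ContDiffOn ℝ 1 (fun p : EuclideanSpace ℝ (Fin d) × ℝ => f p.1 p.2)
      (Set.univ ×ˢ Set.Ioo 0 1))
    (hf_pos : ∀ x : EuclideanSpace ℝ (Fin d), ∀ t ∈ Set.Ioo (0 : ℝ) 1, 0 < f x t)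
    (hcont : ∀ x : EuclideanSpace ℝ (Fin d), ∀ t ∈ Set.Ioo (0 : ℝ) 1,
      deriv (fun s => f x s) t = -(divg d (fun z => f z t • v z t) x))
    (hscore : ∀ x : EuclideanSpace ℝ (Fin d), ∀ t ∈ Set.Ioo (0 : ℝ) 1,
      (1 - t) • gradient (fun z => Real.log (f z t)) x = -x + t • v x t) :
    ∀ α : ℝ → ℝ, (∀ t ∈ Set.Ioo (0 : ℝ) 1, 0 ≤ α t) →
      ∀ x : EuclideanSpace ℝ (Fin d), ∀ t ∈ Set.Ioo (0 : ℝ) 1,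
        deriv (fun s => f x s) t =
          -(divg d (fun z => f z t • (α t • (-z + t • v z t) + v z t)) x) +
            (1 - t) * α t * lapl d (fun z => f z t) x := by
  intro α hα x t ht
  have hF : ContDiff ℝ 2 (fun z => f z t) := hf_x t ht
  have hFd : Differentiable ℝ (fun z => f z t) := hF.differentiable (by norm_num)
  have hVd : ∀ z, DifferentiableAt ℝ (fun y => v y t) z := by
    intro z
    have hopen : IsOpen ((Set.univ : Set (EuclideanSpace ℝ (Fin d))) ×ˢ Set.Ioo (0:ℝ) 1) :=
      isOpen_univ.prod isOpen_Ioo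
    have hmem : (z, t) ∈ (Set.univ : Set (EuclideanSpace ℝ (Fin d))) ×ˢ Set.Ioo (0:ℝ) 1 :=
      ⟨trivial, ht⟩
    have h1 : ContDiffAt ℝ 1 (fun p : EuclideanSpace ℝ (Fin d) × ℝ => v p.1 p.2) (z, t) :=
      hv.contDiffAt (hopen.mem_nhds hmem)
    have h2 : ContDiffAt ℝ 1 (fun y : EuclideanSpace ℝ (Fin d) => (y, t)) z :=
      (contDiff_id.prodMk contDiff_const).contDiffAt
    exact (h1.comp z h2).differentiableAt one_ne_zero
  have hgradlog : ∀ z, gradient (fun y => Real.log (f y t)) z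
      = (f z t)⁻¹ • gradient (fun y => f y t) z := by
    intro z
    have hlog : HasFDerivAt (fun y => Real.log (f y t))
        ((f z t)⁻¹ • fderiv ℝ (fun y => f y t) z) z :=
      (hFd z).hasFDerivAt.log (hf_pos z t ht).ne'
    unfold gradient
    rw [hlog.fderiv, _root_.map_smul]
  have hkey : ∀ z, f z t • (-z + t • v z t) = (1 - t) • gradient (fun y => f y t) z := by
    intro z
    have hs := hscore z t ht
    rw [hgradlog z] at hs
    rw [← hs, smul_smul, smul_smul]
    congr 1
    field_simp [(hf_pos z t ht).ne']
  have hfield : (fun z => f z t • (α t • (-z + t • v z t) + v z t))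
      = fun z => (α t * (1 - t)) • gradient (fun y => f y t) z + f z t • v z t := by
    funext z
    rw [smul_add, smul_comm (f z t) (α t), hkey z, smul_smul]
  have hgd : DifferentiableAt ℝ (fun z => gradient (fun y => f y t) z) x :=
    ((gradient_contDiff _ hF).differentiable one_ne_zero) x
  have hg1 : DifferentiableAt ℝ
      (fun z => (α t * (1 - t)) • gradient (fun y => f y t) z) x := hgd.fun_const_smul _
  have hg2 : DifferentiableAt ℝ (fun z => f z t • v z t) x := (hFd x).smul (hVd x)
  rw [hfield, divg_add _ _ x hg1 hg2, divg_smul _ _ x hgd, divg_gradient _ hF x,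
    hcont x t ht]
  ring
end

section
/- Let p₁ be a probability density on ℝ^d. Then for every t ∈ (0,1) and every x ∈ ℝ^d: f_t(x) > 0, f_t is differentiable at x, and the score identity (1 − t) · ∇_x log f_t(x) = −x + t · v(x, t) holds. -/
open MeasureTheory Real

set_option synthInstance.maxHeartbeats 1000000
set_option maxHeartbeats 1000000

theorem key_bound (σ r : ℝ) (hσ : 0 < σ) :
    r * Real.exp (-r ^ 2 / (2 * σ ^ 2)) ≤ σ := by
  have hE := Real.add_one_le_exp (r ^ 2 / (2 * σ ^ 2))
  have hpos := Real.exp_pos (r ^ 2 / (2 * σ ^ 2))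
  rw [neg_div, Real.exp_neg, ← div_eq_mul_inv, div_le_iff₀ hpos]
  have h3 : (0:ℝ) < 2 * σ ^ 2 := by positivity
  have h2 : r / σ ≤ r ^ 2 / (2 * σ ^ 2) + 1 := by
    rw [div_add' _ _ _ h3.ne', div_le_div_iff₀ hσ h3]
    nlinarith [sq_nonneg (r - σ)]
  calc r = (r / σ) * σ := by field_simp
    _ ≤ (r ^ 2 / (2 * σ ^ 2) + 1) * σ := by nlinarith
    _ ≤ Real.exp (r ^ 2 / (2 * σ ^ 2)) * σ := by nlinarith
    _ = σ * Real.exp _ := mul_comm _ _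

theorem phi_hasFDerivAt (d : ℕ) (t : ℝ) (a x : EuclideanSpace ℝ (Fin d)) :
    HasFDerivAt (fun y => phi d t y a)
      ((((1-t)^2)⁻¹ * phi d t x a) • innerSL ℝ (t • a - x)) x := by
  have h1 : HasFDerivAt (fun y : EuclideanSpace ℝ (Fin d) => y - t • a)
      (ContinuousLinearMap.id ℝ _) x := (hasFDerivAt_id x).sub_const _
  have h5 := (((h1.norm_sq.const_mul (-(2 * (1-t)^2)⁻¹)).exp).const_mul
      ((2 * π * (1 - t) ^ 2) ^ (-(d : ℝ) / 2)))
  have harg : ∀ y : EuclideanSpace ℝ (Fin d),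
      -(2 * (1-t)^2)⁻¹ * ‖y - t • a‖ ^ 2 = -‖y - t • a‖ ^ 2 / (2 * (1 - t) ^ 2) := by
    intro y; ring
  simp only [harg] at h5
  refine h5.congr_fderiv ?_
  ext y
  simp only [phi, ContinuousLinearMap.smul_apply, innerSL_apply_apply,
    ContinuousLinearMap.coe_smul', Pi.smul_apply, ContinuousLinearMap.coe_comp',
    Function.comp_apply, ContinuousLinearMap.coe_id', id_eq, smul_eq_mul,
    ContinuousLinearMap.smul_apply]
  rw [inner_sub_left, inner_sub_left, real_inner_smul_left]
  simp only [mul_inv]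
  ring

/-- For a probability density `p₁` on `ℝ^d`, for every `t ∈ (0,1)` and
every `x`: `f_t(x) > 0`, `f_t` is differentiable at `x`, and the score identity
`(1 − t) ∇_x log f_t(x) = −x + t v(x, t)` holds. -/
theorem stmt2 (d : ℕ) (hd : 1 ≤ d)
    (p₁ : EuclideanSpace ℝ (Fin d) → ℝ)
    (hp₁_meas : Measurable p₁) (hp₁_nonneg : ∀ x, 0 ≤ p₁ x)
    (hp₁_int : ∫ x, p₁ x = 1) :
    ∀ t ∈ Set.Ioo (0 : ℝ) 1, ∀ x : EuclideanSpace ℝ (Fin d),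
      0 < fMarg d p₁ t x ∧ DifferentiableAt ℝ (fMarg d p₁ t) x ∧
      (1 - t) • gradient (fun z => Real.log (fMarg d p₁ t z)) x =
        -x + t • vField d p₁ t x := by
  rintro t ⟨ht0, ht1⟩ x
  have hσ : (0:ℝ) < 1 - t := by linarith
  set C : ℝ := (2 * π * (1 - t) ^ 2) ^ (-(d : ℝ) / 2) with hCdef
  have hC : 0 < C := Real.rpow_pos_of_pos (by positivity) _
  -- basic pointwise facts about phi
  have hφ_pos : ∀ y a : EuclideanSpace ℝ (Fin d), 0 < phi d t y a := fun y a =>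
    mul_pos hC (Real.exp_pos _)
  have hφ_le : ∀ y a : EuclideanSpace ℝ (Fin d), phi d t y a ≤ C := by
    intro y a
    have : Real.exp (-‖y - t • a‖ ^ 2 / (2 * (1 - t) ^ 2)) ≤ 1 := by
      rw [Real.exp_le_one_iff]
      apply div_nonpos_of_nonpos_of_nonneg
      · simp [sq_nonneg]
      · positivity
    calc phi d t y a ≤ C * 1 := by
          rw [phi]; exact mul_le_mul_of_nonneg_left this hC.le
      _ = C := mul_one C
  have hφ_mul_le : ∀ y a : EuclideanSpace ℝ (Fin d), phi d t y a * ‖y - t • a‖ ≤ C * (1 - t) := by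
    intro y a
    have := key_bound (1 - t) ‖y - t • a‖ hσ
    calc phi d t y a * ‖y - t • a‖
        = C * (‖y - t • a‖ * Real.exp (-‖y - t • a‖ ^ 2 / (2 * (1 - t) ^ 2))) := by
          rw [phi]; ring
      _ ≤ C * (1 - t) := mul_le_mul_of_nonneg_left this hC.le
  have hφ_cont : ∀ y : EuclideanSpace ℝ (Fin d), Continuous (fun a : EuclideanSpace ℝ (Fin d) => phi d t y a) := by
    intro y
    apply continuous_const.mul
    exact (((continuous_const.sub (continuous_id.const_smul t)).norm.pow 2).neg.div_const
      _).rexp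
  -- integrability of p₁
  have hp_int : Integrable p₁ := by
    by_contra h
    rw [integral_undef h] at hp₁_int
    norm_num at hp₁_int
  -- integrability of phi * p₁
  have hInt1 : ∀ y : EuclideanSpace ℝ (Fin d), Integrable (fun a => phi d t y a * p₁ a) := by
    intro y
    apply (hp_int.const_mul C).mono'
      (((hφ_cont y).aestronglyMeasurable).mul hp₁_meas.aestronglyMeasurable)
    filter_upwards with a
    simp only [Pi.mul_apply, Real.norm_eq_abs,
      abs_of_nonneg (mul_nonneg (hφ_pos y a).le (hp₁_nonneg a))]
    exact mul_le_mul_of_nonneg_right (hφ_le y a) (hp₁_nonneg a)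
  -- positivity of fMarg
  have hf_pos : 0 < fMarg d p₁ t x := by
    rw [fMarg, integral_pos_iff_support_of_nonneg
      (fun a => mul_nonneg (hφ_pos x a).le (hp₁_nonneg a)) (hInt1 x)]
    have hsupp : (Function.support fun a => phi d t x a * p₁ a) = Function.support p₁ := by
      ext a
      simp [Function.mem_support, mul_ne_zero_iff, (hφ_pos x a).ne']
    rw [hsupp]
    by_contra h
    push_neg at h
    have h0 : volume (Function.support p₁) = 0 := le_antisymm h zero_le
    have hae : p₁ =ᵐ[volume] 0 := by
      have h1 := measure_eq_zero_iff_ae_notMem.mp h0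
      filter_upwards [h1] with a ha
      simpa [Function.notMem_support] using ha
    rw [integral_congr_ae hae] at hp₁_int
    simp at hp₁_int
  -- derivative of the integrand
  have h_diff : ∀ (a y : EuclideanSpace ℝ (Fin d)),
      HasFDerivAt (fun y => phi d t y a * p₁ a)
        (p₁ a • ((((1-t)^2)⁻¹ * phi d t y a) • innerSL ℝ (t • a - y))) y :=
    fun a y => (phi_hasFDerivAt d t a y).mul_const (p₁ a)
  -- bound on the derivative
  have h_bound : ∀ (a y : EuclideanSpace ℝ (Fin d)),
      ‖p₁ a • ((((1-t)^2)⁻¹ * phi d t y a) • innerSL ℝ (t • a - y))‖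
        ≤ ((1-t)⁻¹ * C) * p₁ a := by
    intro a y
    have hbnn : (0:ℝ) ≤ ((1-t)⁻¹ * C) * p₁ a :=
      mul_nonneg (by positivity) (hp₁_nonneg a)
    apply ContinuousLinearMap.opNorm_le_bound _ hbnn
    intro z
    simp only [ContinuousLinearMap.smul_apply, innerSL_apply_apply, smul_eq_mul,
      Real.norm_eq_abs, abs_mul]
    rw [abs_of_nonneg (by positivity : (0:ℝ) ≤ ((1-t)^2)⁻¹),
      abs_of_nonneg (hφ_pos y a).le, abs_of_nonneg (hp₁_nonneg a)]
    have hip : |inner ℝ (t • a - y) z| ≤ ‖y - t • a‖ * ‖z‖ := by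
      rw [← norm_sub_rev]
      exact abs_real_inner_le_norm _ _
    have hA : (0:ℝ) ≤ p₁ a * ((1-t)^2)⁻¹ := mul_nonneg (hp₁_nonneg a) (by positivity)
    calc p₁ a * (((1-t)^2)⁻¹ * phi d t y a * |inner ℝ (t • a - y) z|)
        ≤ p₁ a * (((1-t)^2)⁻¹ * phi d t y a * (‖y - t • a‖ * ‖z‖)) := by
          apply mul_le_mul_of_nonneg_left _ (hp₁_nonneg a)
          exact mul_le_mul_of_nonneg_left hip
            (mul_nonneg (by positivity) (hφ_pos y a).le)
      _ = p₁ a * ((1-t)^2)⁻¹ * (phi d t y a * ‖y - t • a‖) * ‖z‖ := by ring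
      _ ≤ p₁ a * ((1-t)^2)⁻¹ * (C * (1-t)) * ‖z‖ := by
          exact mul_le_mul_of_nonneg_right
            (mul_le_mul_of_nonneg_left (hφ_mul_le y a) hA) (norm_nonneg z)
      _ = ((1-t)⁻¹ * C) * p₁ a * ‖z‖ := by
          field_simp
  -- measurability of the derivative
  have hF'_meas : AEStronglyMeasurable
      (fun a => p₁ a • ((((1-t)^2)⁻¹ * phi d t x a) • innerSL ℝ (t • a - x))) volume := by
    apply AEStronglyMeasurable.smul hp₁_meas.aestronglyMeasurable
    apply Continuous.aestronglyMeasurable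
    exact (continuous_const.mul (hφ_cont x)).smul
      ((innerSL ℝ).continuous.comp ((continuous_id.const_smul t).sub continuous_const))
  -- differentiation under the integral sign
  have hfd : HasFDerivAt (fun y => ∫ a, phi d t y a * p₁ a)
      (∫ a, p₁ a • ((((1-t)^2)⁻¹ * phi d t x a) • innerSL ℝ (t • a - x))) x := by
    apply hasFDerivAt_integral_of_dominated_of_fderiv_le (Metric.ball_mem_nhds x one_pos)
      (Filter.Eventually.of_forall fun y =>
        ((hφ_cont y).aestronglyMeasurable.mul hp₁_meas.aestronglyMeasurable))
      (hInt1 x) hF'_meas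
      (Filter.Eventually.of_forall fun a y _ => h_bound a y)
      ((hp_int.const_mul _))
      (Filter.Eventually.of_forall fun a y _ => h_diff a y)
  have hfm : fMarg d p₁ t = fun y => ∫ a, phi d t y a * p₁ a := rfl
  have hdiff : DifferentiableAt ℝ (fMarg d p₁ t) x := by
    rw [hfm]; exact hfd.differentiableAt
  -- identify the fderiv with a gradient
  set G : EuclideanSpace ℝ (Fin d) :=
    ∫ a, p₁ a • ((((1-t)^2)⁻¹ * phi d t x a) • (t • a - x)) with hGdef
  have key : (∫ a, p₁ a • ((((1-t)^2)⁻¹ * phi d t x a) • innerSL ℝ (t • a - x)))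
      = InnerProductSpace.toDual ℝ (EuclideanSpace ℝ (Fin d)) G := by
    have h1 : ∀ a : EuclideanSpace ℝ (Fin d),
        p₁ a • ((((1-t)^2)⁻¹ * phi d t x a) • innerSL ℝ (t • a - x))
        = (InnerProductSpace.toDual ℝ (EuclideanSpace ℝ (Fin d))).toLinearIsometry
            (p₁ a • ((((1-t)^2)⁻¹ * phi d t x a) • (t • a - x))) := by
      intro a
      ext y
      simp only [ContinuousLinearMap.smul_apply, innerSL_apply_apply, smul_eq_mul,
        LinearIsometryEquiv.coe_toLinearIsometry, InnerProductSpace.toDual_apply_apply,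
        real_inner_smul_left]
    simp only [h1]
    rw [(InnerProductSpace.toDual ℝ (EuclideanSpace ℝ (Fin d))).toLinearIsometry.integral_comp_comm]
    rfl
  have hfd' : HasFDerivAt (fMarg d p₁ t)
      (InnerProductSpace.toDual ℝ (EuclideanSpace ℝ (Fin d)) G) x := by
    rw [hfm, ← key]; exact hfd
  have hne : fMarg d p₁ t x ≠ 0 := hf_pos.ne'
  have hgradlog : HasGradientAt (fun z => Real.log (fMarg d p₁ t z))
      ((fMarg d p₁ t x)⁻¹ • G) x := by
    rw [hasGradientAt_iff_hasFDerivAt, _root_.map_smul]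
    exact (Real.hasDerivAt_log hne).comp_hasFDerivAt x hfd'
  have hgl : gradient (fun z => Real.log (fMarg d p₁ t z)) x = (fMarg d p₁ t x)⁻¹ • G :=
    hgradlog.gradient
  refine ⟨hf_pos, by rw [hfm]; exact hfd.differentiableAt, ?_⟩
  -- the final algebraic identity
  set Iv : EuclideanSpace ℝ (Fin d) := ∫ a, (phi d t x a * p₁ a) • (a - x) with hIv
  -- integrability of the two vector-valued integrands
  have hIntv : Integrable (fun a => (phi d t x a * p₁ a) • (a - x)) := by
    apply ((hp_int.const_mul ((t⁻¹ * ((C * (1-t)) + (1-t) * ‖x‖ * C)))).mono'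
      (((hφ_cont x).aestronglyMeasurable.mul hp₁_meas.aestronglyMeasurable).smul
        ((continuous_id.sub continuous_const).aestronglyMeasurable)))
    filter_upwards with a
    simp only [Pi.mul_apply, Pi.smul_apply', Pi.sub_apply, id_eq, norm_smul, Real.norm_eq_abs]
    rw [abs_of_nonneg (mul_nonneg (hφ_pos x a).le (hp₁_nonneg a))]
    have hvec : t • (a - x) = (t • a - x) + (1-t) • x := by module
    have hnorm : t * ‖a - x‖ ≤ ‖x - t • a‖ + (1-t) * ‖x‖ := by
      have := norm_add_le (t • a - x) ((1-t) • x)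
      rw [← hvec, norm_smul, norm_smul, Real.norm_eq_abs, Real.norm_eq_abs,
        abs_of_nonneg ht0.le, abs_of_nonneg hσ.le, norm_sub_rev (t • a) x] at this
      exact this
    have h6 : phi d t x a * ‖a - x‖ ≤ t⁻¹ * ((C * (1-t)) + (1-t) * ‖x‖ * C) := by
      rw [inv_mul_eq_div, le_div_iff₀ ht0]
      calc phi d t x a * ‖a - x‖ * t
          = phi d t x a * (t * ‖a - x‖) := by ring
        _ ≤ phi d t x a * (‖x - t • a‖ + (1-t) * ‖x‖) :=
            mul_le_mul_of_nonneg_left hnorm (hφ_pos x a).le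
        _ = phi d t x a * ‖x - t • a‖ + (1-t) * ‖x‖ * phi d t x a := by ring
        _ ≤ C * (1-t) + (1-t) * ‖x‖ * C :=
            add_le_add (hφ_mul_le x a)
              (mul_le_mul_of_nonneg_left (hφ_le x a)
                (mul_nonneg hσ.le (norm_nonneg x)))
    calc phi d t x a * p₁ a * ‖a - x‖
        = (phi d t x a * ‖a - x‖) * p₁ a := by ring
      _ ≤ (t⁻¹ * ((C * (1-t)) + (1-t) * ‖x‖ * C)) * p₁ a :=
          mul_le_mul_of_nonneg_right h6 (hp₁_nonneg a)
  have hIntJ : Integrable (fun a => (phi d t x a * p₁ a) • (t • a - x)) := by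
    apply ((hp_int.const_mul (C * (1-t))).mono'
      (((hφ_cont x).aestronglyMeasurable.mul hp₁_meas.aestronglyMeasurable).smul
        (((continuous_id.const_smul t).sub continuous_const).aestronglyMeasurable)))
    filter_upwards with a
    simp only [Pi.mul_apply, Pi.smul_apply', Pi.sub_apply, id_eq, norm_smul, Real.norm_eq_abs]
    rw [abs_of_nonneg (mul_nonneg (hφ_pos x a).le (hp₁_nonneg a)), norm_sub_rev]
    calc phi d t x a * p₁ a * ‖x - t • a‖
        = (phi d t x a * ‖x - t • a‖) * p₁ a := by ring
      _ ≤ (C * (1-t)) * p₁ a := mul_le_mul_of_nonneg_right (hφ_mul_le x a) (hp₁_nonneg a)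
  -- split the J integral
  have hsplit : ∀ a : EuclideanSpace ℝ (Fin d), (phi d t x a * p₁ a) • (t • a - x)
      = t • ((phi d t x a * p₁ a) • (a - x)) - ((1-t) * (phi d t x a * p₁ a)) • x := by
    intro a; module
  have hJ : (∫ a, (phi d t x a * p₁ a) • (t • a - x))
      = t • Iv - ((1-t) * fMarg d p₁ t x) • x := by
    rw [hIv, fMarg]
    simp only [hsplit]
    have hIntv' : Integrable (fun a => t • ((phi d t x a * p₁ a) • (a - x))) volume :=
      hIntv.smul t
    have hIntc : Integrable (fun a => ((1-t) * (phi d t x a * p₁ a)) • x) volume :=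
      ((hInt1 x).const_mul (1-t)).smul_const x
    rw [integral_sub hIntv' hIntc, integral_smul, integral_smul_const, integral_const_mul]
  have hG2 : G = ((1-t)^2)⁻¹ • (t • Iv - ((1-t) * fMarg d p₁ t x) • x) := by
    rw [hGdef, ← hJ, ← integral_smul]
    congr 1
    funext a
    match_scalars <;> ring
  rw [hgl, hG2]
  simp only [vField]
  rw [← hIv]
  have hσ2 : ((1-t):ℝ) ≠ 0 := hσ.ne'
  match_scalars <;> (field_simp; try ring)
end

section
/- Let t₁ < t₂ be reals, let v: ℝ^d × [t₁, t₂] → ℝ^d be continuously differentiable, let p: ℝ^d × [t₁, t₂] → (0, ∞) be continuously differentiable and satisfy the continuity equation ∂p/∂t(x, t) = −∇_x · (v(x, t) p(x, t)) for all (x, t), and let x: [t₁, t₂] → ℝ^d be differentiable with x′(t) = v(x(t), t) for all t. Then t ↦ log p(x(t), t) is differentiable on [t₁, t₂] with derivative −(∇_x · v)(x(t), t), and consequently p(x(t₂), t₂) = p(x(t₁), t₁) · exp( −∫_{t₁}^{t₂} (∇_x · v)(x(t), t) dt ). -/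
open MeasureTheory Real

/-- Restriction of a two-variable derivative to the space slice. -/
lemma slice_fst {E F : Type*} [NormedAddCommGroup E] [NormedSpace ℝ E]
    [NormedAddCommGroup F] [NormedSpace ℝ F]
    (g : E → ℝ → F) {S : Set (E × ℝ)} {L : (E × ℝ) →L[ℝ] F} {z : E} {t : ℝ}
    (hg : HasFDerivWithinAt (fun q : E × ℝ => g q.1 q.2) L S (z, t))
    (hmaps : ∀ w : E, (w, t) ∈ S) :
    HasFDerivAt (fun w => g w t) (L.comp (ContinuousLinearMap.inl ℝ E ℝ)) z := by
  have hι : HasFDerivAt (fun w : E => (w, t)) (ContinuousLinearMap.inl ℝ E ℝ) z :=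
    hasFDerivAt_prodMk_left z t
  have h := hg.comp (x := z) (hι.hasFDerivWithinAt (s := Set.univ)) (fun w _ => hmaps w)
  rw [hasFDerivWithinAt_univ] at h
  have he : ((fun q : E × ℝ => g q.1 q.2) ∘ fun w : E => (w, t)) = fun w => g w t := rfl
  rwa [he] at h

/-- Decomposition of a vector in `EuclideanSpace` along the standard basis. -/
lemma euclid_sum_single {d : ℕ} (y : EuclideanSpace ℝ (Fin d)) :
    ∑ i, y i • (EuclideanSpace.single i 1 : EuclideanSpace ℝ (Fin d)) = y := by
  have h := (EuclideanSpace.basisFun (Fin d) ℝ).sum_repr y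
  simpa [EuclideanSpace.basisFun_apply, EuclideanSpace.basisFun_repr] using h

/-- Instantaneous change of variables along an ODE path: if `p` satisfies
the continuity equation for `v` and `x(·)` solves `x′(t) = v(x(t), t)`, then
`t ↦ log p(x(t), t)` is differentiable with derivative `−(∇_x · v)(x(t), t)`, and hence
`p(x(t₂), t₂) = p(x(t₁), t₁) exp(−∫_{t₁}^{t₂} (∇_x · v)(x(t), t) dt)`. -/
theorem stmt6 (d : ℕ) (t₁ t₂ : ℝ) (h12 : t₁ < t₂)
    (v : EuclideanSpace ℝ (Fin d) → ℝ → EuclideanSpace ℝ (Fin d))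
    (p : EuclideanSpace ℝ (Fin d) → ℝ → ℝ)
    (hv : ContDiffOn ℝ 1 (fun q : EuclideanSpace ℝ (Fin d) × ℝ => v q.1 q.2)
      (Set.univ ×ˢ Set.Icc t₁ t₂))
    (hp : ContDiffOn ℝ 1 (fun q : EuclideanSpace ℝ (Fin d) × ℝ => p q.1 q.2)
      (Set.univ ×ˢ Set.Icc t₁ t₂))
    (hp_pos : ∀ z : EuclideanSpace ℝ (Fin d), ∀ t ∈ Set.Icc t₁ t₂, 0 < p z t)
    (hpde : ∀ z : EuclideanSpace ℝ (Fin d), ∀ t ∈ Set.Icc t₁ t₂,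
      HasDerivWithinAt (fun s => p z s) (-(divg d (fun w => p w t • v w t) z))
        (Set.Icc t₁ t₂) t)
    (x : ℝ → EuclideanSpace ℝ (Fin d))
    (hx : ∀ t ∈ Set.Icc t₁ t₂, HasDerivWithinAt x (v (x t) t) (Set.Icc t₁ t₂) t) :
    (∀ t ∈ Set.Icc t₁ t₂,
      HasDerivWithinAt (fun s => Real.log (p (x s) s))
        (-(divg d (fun w => v w t) (x t))) (Set.Icc t₁ t₂) t) ∧
    p (x t₂) t₂ = p (x t₁) t₁ *
      Real.exp (-∫ t in t₁..t₂, divg d (fun w => v w t) (x t)) := by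
  classical
  have hUD : UniqueDiffOn ℝ (Set.univ ×ˢ Set.Icc t₁ t₂) := (uniqueDiffOn_univ (E := EuclideanSpace ℝ (Fin d))).prod (uniqueDiffOn_Icc h12)
  have hmaps : ∀ (w : (EuclideanSpace ℝ (Fin d))) (t : ℝ), t ∈ Set.Icc t₁ t₂ → (w, t) ∈ (Set.univ ×ˢ Set.Icc t₁ t₂) :=
    fun w t ht => ⟨Set.mem_univ _, ht⟩
  -- space-slice derivatives of p and v, and their relation to fderivWithin
  have hpz : ∀ (z : (EuclideanSpace ℝ (Fin d))), ∀ t ∈ Set.Icc t₁ t₂,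
      HasFDerivAt (fun w => p w t)
        ((fderivWithin ℝ (fun q : (EuclideanSpace ℝ (Fin d)) × ℝ => p q.1 q.2) (Set.univ ×ˢ Set.Icc t₁ t₂) (z, t)).comp
          (ContinuousLinearMap.inl ℝ (EuclideanSpace ℝ (Fin d)) ℝ)) z := by
    intro z t ht
    exact slice_fst p ((hp.differentiableOn one_ne_zero (z, t) (hmaps z t ht)).hasFDerivWithinAt)
      (fun w => hmaps w t ht)
  have hvz : ∀ (z : (EuclideanSpace ℝ (Fin d))), ∀ t ∈ Set.Icc t₁ t₂,
      HasFDerivAt (fun w => v w t)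
        ((fderivWithin ℝ (fun q : (EuclideanSpace ℝ (Fin d)) × ℝ => v q.1 q.2) (Set.univ ×ˢ Set.Icc t₁ t₂) (z, t)).comp
          (ContinuousLinearMap.inl ℝ (EuclideanSpace ℝ (Fin d)) ℝ)) z := by
    intro z t ht
    exact slice_fst v ((hv.differentiableOn one_ne_zero (z, t) (hmaps z t ht)).hasFDerivWithinAt)
      (fun w => hmaps w t ht)
  -- key computation: divergence of p • v via product rule
  have hdivpv : ∀ (z : (EuclideanSpace ℝ (Fin d))), ∀ t ∈ Set.Icc t₁ t₂,
      divg d (fun w => p w t • v w t) z =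
        fderiv ℝ (fun w => p w t) z (v z t) + p z t * divg d (fun w => v w t) z := by
    intro z t ht
    have hP := hpz z t ht
    have hV := hvz z t ht
    have hprod : HasFDerivAt (fun w => p w t • v w t) _ z := hP.smul hV
    simp only [divg]
    rw [hprod.fderiv, hV.fderiv, hP.fderiv]
    set L1 : (EuclideanSpace ℝ (Fin d)) →L[ℝ] ℝ := (fderivWithin ℝ (fun q : (EuclideanSpace ℝ (Fin d)) × ℝ => p q.1 q.2) (Set.univ ×ˢ Set.Icc t₁ t₂) (z, t)).comp
      (ContinuousLinearMap.inl ℝ (EuclideanSpace ℝ (Fin d)) ℝ) with hL1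
    set L2 : (EuclideanSpace ℝ (Fin d)) →L[ℝ] (EuclideanSpace ℝ (Fin d)) := (fderivWithin ℝ (fun q : (EuclideanSpace ℝ (Fin d)) × ℝ => v q.1 q.2) (Set.univ ×ˢ Set.Icc t₁ t₂) (z, t)).comp
      (ContinuousLinearMap.inl ℝ (EuclideanSpace ℝ (Fin d)) ℝ) with hL2
    have hterm : ∀ i : Fin d,
        ((p z t • L2 + L1.smulRight (v z t)) (EuclideanSpace.single i 1)) i
          = p z t * (L2 (EuclideanSpace.single i 1) i)
            + v z t i * L1 (EuclideanSpace.single i 1) := by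
      intro i
      simp only [ContinuousLinearMap.add_apply, ContinuousLinearMap.smul_apply,
        ContinuousLinearMap.smulRight_apply, PiLp.add_apply, PiLp.smul_apply, smul_eq_mul]
      ring
    have hsum : (∑ i, ((p z t • L2 + L1.smulRight (v z t)) (EuclideanSpace.single i 1)) i)
        = ∑ i, (p z t * (L2 (EuclideanSpace.single i 1) i)
            + v z t i * L1 (EuclideanSpace.single i 1)) :=
      Finset.sum_congr rfl fun i _ => hterm i
    have hconv : L1 (v z t) = ∑ i, v z t i * L1 (EuclideanSpace.single i 1) := by
      conv_lhs => rw [← euclid_sum_single (v z t)]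
      rw [map_sum]
      simp [smul_eq_mul]
    rw [hsum, Finset.sum_add_distrib, ← Finset.mul_sum, ← hconv]
    ring
  -- time-slice derivative of p: identify fderivWithin applied to (0,1)
  have hpt : ∀ (z : (EuclideanSpace ℝ (Fin d))), ∀ t ∈ Set.Icc t₁ t₂,
      (fderivWithin ℝ (fun q : (EuclideanSpace ℝ (Fin d)) × ℝ => p q.1 q.2) (Set.univ ×ˢ Set.Icc t₁ t₂) (z, t)) ((0 : (EuclideanSpace ℝ (Fin d))), (1 : ℝ)) =
        -(divg d (fun w => p w t • v w t) z) := by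
    intro z t ht
    have hι : HasDerivWithinAt (fun s : ℝ => ((z, s) : (EuclideanSpace ℝ (Fin d)) × ℝ)) ((0 : (EuclideanSpace ℝ (Fin d))), (1 : ℝ))
        (Set.Icc t₁ t₂) t := by
      have h1 : HasDerivWithinAt (fun s : ℝ => s) (1 : ℝ) (Set.Icc t₁ t₂) t :=
        (hasDerivWithinAt_id t _)
      have h0 : HasDerivWithinAt (fun _ : ℝ => z) (0 : (EuclideanSpace ℝ (Fin d))) (Set.Icc t₁ t₂) t :=
        (hasDerivWithinAt_const t _ z)
      exact h0.prodMk h1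
    have hF := (hp.differentiableOn one_ne_zero (z, t) (hmaps z t ht)).hasFDerivWithinAt
    have hcomp := hF.comp_hasDerivWithinAt t hι (fun s hs => hmaps z s hs)
    have he : ((fun q : (EuclideanSpace ℝ (Fin d)) × ℝ => p q.1 q.2) ∘ fun s : ℝ => ((z, s) : (EuclideanSpace ℝ (Fin d)) × ℝ))
        = fun s => p z s := rfl
    rw [he] at hcomp
    have e1 := hcomp.derivWithin ((uniqueDiffOn_Icc h12) t ht)
    have e2 := (hpde z t ht).derivWithin ((uniqueDiffOn_Icc h12) t ht)
    rw [← e1, ← e2]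
  -- derivative of t ↦ p (x t) t
  have key : ∀ t ∈ Set.Icc t₁ t₂,
      HasDerivWithinAt (fun s => p (x s) s)
        (-(p (x t) t * divg d (fun w => v w t) (x t))) (Set.Icc t₁ t₂) t := by
    intro t ht
    have hγ : HasDerivWithinAt (fun s => ((x s, s) : (EuclideanSpace ℝ (Fin d)) × ℝ)) ((v (x t) t, 1))
        (Set.Icc t₁ t₂) t := (hx t ht).prodMk (hasDerivWithinAt_id t _)
    have hF := (hp.differentiableOn one_ne_zero (x t, t) (hmaps (x t) t ht)).hasFDerivWithinAt
    have hcomp := hF.comp_hasDerivWithinAt (f := fun s : ℝ => ((x s, s) : EuclideanSpace ℝ (Fin d) × ℝ)) t hγ (fun s hs => hmaps (x s) s hs)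
    have he : ((fun q : (EuclideanSpace ℝ (Fin d)) × ℝ => p q.1 q.2) ∘ fun s : ℝ => ((x s, s) : (EuclideanSpace ℝ (Fin d)) × ℝ))
        = fun s => p (x s) s := rfl
    rw [he] at hcomp
    have hsplit : (fderivWithin ℝ (fun q : (EuclideanSpace ℝ (Fin d)) × ℝ => p q.1 q.2) (Set.univ ×ˢ Set.Icc t₁ t₂) (x t, t)) ((v (x t) t, 1))
        = -(p (x t) t * divg d (fun w => v w t) (x t)) := by
      have hdecomp : ((v (x t) t, (1 : ℝ)) : (EuclideanSpace ℝ (Fin d)) × ℝ) = (v (x t) t, 0) + (0, 1) := by simp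
      rw [hdecomp, map_add, hpt (x t) t ht]
      have hfst : (fderivWithin ℝ (fun q : (EuclideanSpace ℝ (Fin d)) × ℝ => p q.1 q.2) (Set.univ ×ˢ Set.Icc t₁ t₂) (x t, t)) ((v (x t) t, 0))
          = fderiv ℝ (fun w => p w t) (x t) (v (x t) t) := by
        rw [(hpz (x t) t ht).fderiv]
        rfl
      rw [hfst, hdivpv (x t) t ht]
      ring
    exact hsplit ▸ hcomp
  -- first conjunct
  have main : ∀ t ∈ Set.Icc t₁ t₂,
      HasDerivWithinAt (fun s => Real.log (p (x s) s))
        (-(divg d (fun w => v w t) (x t))) (Set.Icc t₁ t₂) t := by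
    intro t ht
    have hpos := hp_pos (x t) t ht
    have hlog := (key t ht).log (ne_of_gt hpos)
    have : -(p (x t) t * divg d (fun w => v w t) (x t)) / p (x t) t
        = -(divg d (fun w => v w t) (x t)) := by
      field_simp
    exact this ▸ hlog
  refine ⟨main, ?_⟩
  -- continuity of the integrand
  have hxcont : ContinuousOn x (Set.Icc t₁ t₂) :=
    fun t ht => (hx t ht).continuousWithinAt
  have hfd : ContinuousOn (fun q : (EuclideanSpace ℝ (Fin d)) × ℝ =>
      fderivWithin ℝ (fun q : (EuclideanSpace ℝ (Fin d)) × ℝ => v q.1 q.2) (Set.univ ×ˢ Set.Icc t₁ t₂) q) (Set.univ ×ˢ Set.Icc t₁ t₂) :=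
    hv.continuousOn_fderivWithin hUD le_rfl
  have hfcont : ContinuousOn (fun t => divg d (fun w => v w t) (x t)) (Set.Icc t₁ t₂) := by
    have hγc : ContinuousOn (fun t => ((x t, t) : (EuclideanSpace ℝ (Fin d)) × ℝ)) (Set.Icc t₁ t₂) :=
      hxcont.prodMk continuousOn_id
    have h1 : ContinuousOn (fun t =>
        fderivWithin ℝ (fun q : (EuclideanSpace ℝ (Fin d)) × ℝ => v q.1 q.2) (Set.univ ×ˢ Set.Icc t₁ t₂) (x t, t)) (Set.Icc t₁ t₂) :=
      hfd.comp hγc (fun t ht => hmaps (x t) t ht)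
    have h2 : ∀ t ∈ Set.Icc t₁ t₂, divg d (fun w => v w t) (x t) =
        ∑ i, (fderivWithin ℝ (fun q : (EuclideanSpace ℝ (Fin d)) × ℝ => v q.1 q.2) (Set.univ ×ˢ Set.Icc t₁ t₂) (x t, t))
          ((EuclideanSpace.single i 1 : (EuclideanSpace ℝ (Fin d))), 0) i := by
      intro t ht
      rw [divg, (hvz (x t) t ht).fderiv]
      rfl
    refine ContinuousOn.congr ?_ h2
    apply continuousOn_finset_sum
    intro i _
    have heval : Continuous fun L : ((EuclideanSpace ℝ (Fin d)) × ℝ) →L[ℝ] (EuclideanSpace ℝ (Fin d)) =>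
        (L ((EuclideanSpace.single i 1 : (EuclideanSpace ℝ (Fin d))), 0)) i := by
      have h3 : Continuous fun L : ((EuclideanSpace ℝ (Fin d)) × ℝ) →L[ℝ] (EuclideanSpace ℝ (Fin d)) =>
          L ((EuclideanSpace.single i 1 : (EuclideanSpace ℝ (Fin d))), 0) :=
        (ContinuousLinearMap.apply ℝ (EuclideanSpace ℝ (Fin d)) (((EuclideanSpace.single i 1 : (EuclideanSpace ℝ (Fin d))), 0) : (EuclideanSpace ℝ (Fin d)) × ℝ)).continuous
      exact (PiLp.continuous_apply 2 _ i).comp h3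
    exact heval.comp_continuousOn h1
  -- FTC
  have hgc : ContinuousOn (fun s => Real.log (p (x s) s)) (Set.Icc t₁ t₂) :=
    fun t ht => (main t ht).continuousWithinAt
  have hint : IntervalIntegrable (fun t => -(divg d (fun w => v w t) (x t)))
      volume t₁ t₂ := by
    apply ContinuousOn.intervalIntegrable
    rw [Set.uIcc_of_le h12.le]
    exact hfcont.neg
  have hftc := intervalIntegral.integral_eq_sub_of_hasDeriv_right_of_le h12.le hgc
    (fun t ht => ((main t (Set.Ioo_subset_Icc_self ht)).hasDerivAt
      (Icc_mem_nhds ht.1 ht.2)).hasDerivWithinAt) hint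
  rw [intervalIntegral.integral_neg] at hftc
  have h1 : Real.log (p (x t₂) t₂) = Real.log (p (x t₁) t₁) +
      (-∫ t in t₁..t₂, divg d (fun w => v w t) (x t)) := by linarith [hftc]
  have hp1 := hp_pos (x t₁) t₁ (Set.left_mem_Icc.2 h12.le)
  have hp2 := hp_pos (x t₂) t₂ (Set.right_mem_Icc.2 h12.le)
  calc p (x t₂) t₂ = Real.exp (Real.log (p (x t₂) t₂)) := (Real.exp_log hp2).symm
    _ = Real.exp (Real.log (p (x t₁) t₁)) *
        Real.exp (-∫ t in t₁..t₂, divg d (fun w => v w t) (x t)) := by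
        rw [h1, Real.exp_add]
    _ = p (x t₁) t₁ * Real.exp (-∫ t in t₁..t₂, divg d (fun w => v w t) (x t)) := by
        rw [Real.exp_log hp1]
end
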